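/- Let A=(L,E,R,∂₂,∂₁,{,}) and A'=(L',E',R',∂₂',∂₁',{,}) be 2-crossed modules of commutative algebras, f a 2-crossed module morphism, and (s,t) a quadratic f-derivation. Then for all l,l' ∈ L and r ∈ R: t(∂₂(l)∂₂(l')) = f₂(l)(t∘∂₂)(l') + f₂(l')(t∘∂₂)(l) + (t∘∂₂)(l)(t∘∂₂)(l'), and t(r▶∂₂(l)) = f₀(r)▶(t∘∂₂)(l) + (∂₁'∘s)(r)▶f₂(l) + (∂₁'∘s)(r)▶(t∘∂₂)(l). -/

import Mathlib

/-- An action of a commutative `k`-algebra `R` on a commutative `k`-algebra `M`: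
a `k`-bilinear map satisfying `r▶(mm') = (r▶m)m' = m(r▶m')` and `(rr')▶m = r▶(r'▶m)`. -/
structure AlgAction (k R M : Type*) [CommRing k] [CommRing R] [CommRing M]
    [Algebra k R] [Algebra k M] where
  act : R →ₗ[k] M →ₗ[k] M
  a1 : ∀ (r : R) (m m' : M), act r (m * m') = act r m * m'
  a1' : ∀ (r : R) (m m' : M), act r (m * m') = m * act r m'
  a2 : ∀ (r r' : R) (m : M), act (r * r') m = act r (act r' m)

/-- A 2-crossed module of commutative `k`-algebras, with Peiffer lifting `lift e e' = {e ⊗ e'}`.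
The action `e ▶' l` of `E` on `L` is `lift e (d2 l)` (axiom 2XM5 is definitional). -/
structure TwoCrossedModule (k L E R : Type*) [CommRing k] [CommRing L] [CommRing E] [CommRing R]
    [Algebra k L] [Algebra k E] [Algebra k R] where
  actE : AlgAction k R E
  actL : AlgAction k R L
  d2 : L →ₗ[k] E
  d1 : E →ₗ[k] R
  d2_mul : ∀ l l' : L, d2 (l * l') = d2 l * d2 l'
  d1_mul : ∀ e e' : E, d1 (e * e') = d1 e * d1 e'
  comp : ∀ l : L, d1 (d2 l) = 0
  d1_act : ∀ (r : R) (e : E), d1 (actE.act r e) = r * d1 e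
  d2_act : ∀ (r : R) (l : L), d2 (actL.act r l) = actE.act r (d2 l)
  lift : E →ₗ[k] E →ₗ[k] L
  axm1 : ∀ e e' : E, d2 (lift e e') = e * e' - actE.act (d1 e') e
  axm2 : ∀ l l' : L, lift (d2 l) (d2 l') = l * l'
  axm3 : ∀ e e' e'' : E, lift e (e' * e'') = lift (e * e') e'' + actL.act (d1 e'') (lift e e')
  axm4 : ∀ (l : L) (e : E), lift (d2 l) e = lift e (d2 l) - actL.act (d1 e) l
  axm6a : ∀ (r : R) (e e' : E), actL.act r (lift e e') = lift (actE.act r e) e'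
  axm6b : ∀ (r : R) (e e' : E), actL.act r (lift e e') = lift e (actE.act r e')

/-- A morphism of 2-crossed modules of commutative `k`-algebras. -/
structure TCMHom {k L E R L' E' R' : Type*} [CommRing k] [CommRing L] [CommRing E] [CommRing R]
    [CommRing L'] [CommRing E'] [CommRing R']
    [Algebra k L] [Algebra k E] [Algebra k R] [Algebra k L'] [Algebra k E'] [Algebra k R']
    (T : TwoCrossedModule k L E R) (T' : TwoCrossedModule k L' E' R') where
  f0 : R →ₗ[k] R'
  f1 : E →ₗ[k] E'
  f2 : L →ₗ[k] L'
  f0_mul : ∀ r r', f0 (r * r') = f0 r * f0 r'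
  f1_mul : ∀ e e', f1 (e * e') = f1 e * f1 e'
  f2_mul : ∀ l l', f2 (l * l') = f2 l * f2 l'
  comm1 : ∀ e, f0 (T.d1 e) = T'.d1 (f1 e)
  comm2 : ∀ l, f1 (T.d2 l) = T'.d2 (f2 l)
  hactE : ∀ r e, f1 (T.actE.act r e) = T'.actE.act (f0 r) (f1 e)
  hactL : ∀ r l, f2 (T.actL.act r l) = T'.actL.act (f0 r) (f2 l)
  hlift : ∀ e e', f2 (T.lift e e') = T'.lift (f1 e) (f1 e')

/-- `(s,t)` is a quadratic `f`-derivation (Definition of the paper), where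
`e ▶' l = lift e (d2 l)`. -/
def IsQuadDeriv {k L E R L' E' R' : Type*} [CommRing k] [CommRing L] [CommRing E] [CommRing R]
    [CommRing L'] [CommRing E'] [CommRing R']
    [Algebra k L] [Algebra k E] [Algebra k R] [Algebra k L'] [Algebra k E'] [Algebra k R']
    {T : TwoCrossedModule k L E R} {T' : TwoCrossedModule k L' E' R'}
    (f : TCMHom T T') (s : R →ₗ[k] E') (t : E →ₗ[k] L') : Prop :=
  (∀ r r', s (r * r') = T'.actE.act (f.f0 r) (s r') + T'.actE.act (f.f0 r') (s r)
      + s r * s r') ∧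
  (∀ e e', t (e * e') = T'.lift (s (T.d1 e)) (f.f1 e') + T'.lift (s (T.d1 e')) (f.f1 e)
      + T'.lift (f.f1 e) (T'.d2 (t e')) + T'.lift (f.f1 e') (T'.d2 (t e))
      + T'.lift (s (T.d1 e)) (T'.d2 (t e')) + T'.lift (s (T.d1 e')) (T'.d2 (t e))
      + t e * t e') ∧
  (∀ r e, t (T.actE.act r e) = T'.actL.act (f.f0 r) (t e) + T'.actL.act (T'.d1 (s r)) (t e)
      + T'.lift (s r) (f.f1 e) - T'.lift (f.f1 e) (s r) - T'.lift (s (T.d1 e)) (s r))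

/-- `(s,t)` connects `f` to `g`:
`g₀ = f₀ + ∂₁'∘s`, `g₁ = f₁ + s∘∂₁ + ∂₂'∘t`, `g₂ = f₂ + t∘∂₂`. -/
def QConnects {k L E R L' E' R' : Type*} [CommRing k] [CommRing L] [CommRing E] [CommRing R]
    [CommRing L'] [CommRing E'] [CommRing R']
    [Algebra k L] [Algebra k E] [Algebra k R] [Algebra k L'] [Algebra k E'] [Algebra k R']
    {T : TwoCrossedModule k L E R} {T' : TwoCrossedModule k L' E' R'}
    (f g : TCMHom T T') (s : R →ₗ[k] E') (t : E →ₗ[k] L') : Prop :=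
  (∀ r, g.f0 r = f.f0 r + T'.d1 (s r)) ∧
  (∀ e, g.f1 e = f.f1 e + s (T.d1 e) + T'.d2 (t e)) ∧
  (∀ l, g.f2 l = f.f2 l + t (T.d2 l))

/-! On `ker ∂₁`, and hence on `∂₂(L)`, every term of a quadratic derivation that passes through
`s ∘ ∂₁` vanishes. What remains is turned into the claimed form by `f₁ ∘ ∂₂ = ∂₂' ∘ f₂` and the
Peiffer identities `{∂₂l ⊗ ∂₂l'} = ll'` (2XM2) and `{e ⊗ ∂₂l} - {∂₂l ⊗ e} = ∂₁e ▶ l` (2XM4). -/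

theorem TwoCrossedModule.lift_d2_sub_lift_d2 {k L E R : Type*} [CommRing k] [CommRing L]
    [CommRing E] [CommRing R] [Algebra k L] [Algebra k E] [Algebra k R]
    (T : TwoCrossedModule k L E R) (e : E) (l : L) :
    T.lift e (T.d2 l) - T.lift (T.d2 l) e = T.actL.act (T.d1 e) l := by
  rw [T.axm4, sub_sub_cancel]

namespace IsQuadDeriv

variable {k L E R L' E' R' : Type*} [CommRing k] [CommRing L] [CommRing E] [CommRing R]
  [CommRing L'] [CommRing E'] [CommRing R']
  [Algebra k L] [Algebra k E] [Algebra k R] [Algebra k L'] [Algebra k E'] [Algebra k R']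
  {T : TwoCrossedModule k L E R} {T' : TwoCrossedModule k L' E' R'}
  {f : TCMHom T T'} {s : R →ₗ[k] E'} {t : E →ₗ[k] L'}

theorem map_mul_of_d1_eq_zero (hq : IsQuadDeriv f s t) {e e' : E}
    (he : T.d1 e = 0) (he' : T.d1 e' = 0) :
    t (e * e') = T'.lift (f.f1 e) (T'.d2 (t e')) + T'.lift (f.f1 e') (T'.d2 (t e))
      + t e * t e' := by
  simp only [hq.2.1, he, he', map_zero, LinearMap.zero_apply, zero_add, add_zero]

theorem map_act_of_d1_eq_zero (hq : IsQuadDeriv f s t) (r : R) {e : E} (he : T.d1 e = 0) :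
    t (T.actE.act r e) = T'.actL.act (f.f0 r) (t e) + T'.actL.act (T'.d1 (s r)) (t e)
      + (T'.lift (s r) (f.f1 e) - T'.lift (f.f1 e) (s r)) := by
  rw [hq.2.2, he, map_zero, map_zero, LinearMap.zero_apply, sub_zero, add_sub_assoc]

theorem map_d2_mul_d2 (hq : IsQuadDeriv f s t) (l l' : L) :
    t (T.d2 l * T.d2 l')
      = f.f2 l * t (T.d2 l') + f.f2 l' * t (T.d2 l) + t (T.d2 l) * t (T.d2 l') := by
  rw [hq.map_mul_of_d1_eq_zero (T.comp l) (T.comp l'), f.comm2, f.comm2, T'.axm2, T'.axm2]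

theorem map_act_d2 (hq : IsQuadDeriv f s t) (r : R) (l : L) :
    t (T.actE.act r (T.d2 l)) = T'.actL.act (f.f0 r) (t (T.d2 l))
      + T'.actL.act (T'.d1 (s r)) (f.f2 l) + T'.actL.act (T'.d1 (s r)) (t (T.d2 l)) := by
  rw [hq.map_act_of_d1_eq_zero r (T.comp l), f.comm2, T'.lift_d2_sub_lift_d2]
  abel

end IsQuadDeriv

/-- consequences of a quadratic `f`-derivation on `∂₂`-images. -/
theorem stmt16 (k L E R L2 E2 R2 : Type*) [CommRing k] [CommRing L] [CommRing E] [CommRing R]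
    [CommRing L2] [CommRing E2] [CommRing R2]
    [Algebra k L] [Algebra k E] [Algebra k R] [Algebra k L2] [Algebra k E2] [Algebra k R2]
    (T : TwoCrossedModule k L E R) (T2 : TwoCrossedModule k L2 E2 R2)
    (f : TCMHom T T2) (s : R →ₗ[k] E2) (t : E →ₗ[k] L2) (hq : IsQuadDeriv f s t) :
    (∀ l l' : L, t (T.d2 l * T.d2 l')
        = f.f2 l * t (T.d2 l') + f.f2 l' * t (T.d2 l) + t (T.d2 l) * t (T.d2 l')) ∧
    (∀ (r : R) (l : L), t (T.actE.act r (T.d2 l))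
        = T2.actL.act (f.f0 r) (t (T.d2 l)) + T2.actL.act (T2.d1 (s r)) (f.f2 l)
          + T2.actL.act (T2.d1 (s r)) (t (T.d2 l))) := by
  exact ⟨hq.map_d2_mul_d2, hq.map_act_d2⟩
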